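/- arXiv:1805.06445 — 7 statements merged into one kernel-verified Lean document; each statement's English description precedes it below -/
import Mathlib

section
/- The SINDy iterative scheme converges in at most n steps: there exists M ≤ n such that x^k = x^{M+1} for all k ≥ M+1. -/
open Matrix
open scoped Matrix.Norms.L2Operator

/-- The ℓ² norm of a vector. -/
noncomputable def nrm {ι : Type*} [Fintype ι] (v : ι → ℝ) : ℝ :=
  Real.sqrt (∑ i, v i ^ 2)

/-- The support of a vector, as a `Finset`. -/
noncomputable def spt {n : ℕ} (x : Fin n → ℝ) : Finset (Fin n) :=
  Finset.univ.filter (fun j => x j ≠ 0)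

lemma nrm_le_nrm_iff {ι : Type*} [Fintype ι] (v w : ι → ℝ) :
    nrm v ≤ nrm w ↔ ∑ i, v i ^ 2 ≤ ∑ i, w i ^ 2 := by
  unfold nrm
  rw [Real.sqrt_le_sqrt_iff (by positivity)]

/-- Uniqueness of least-squares minimizers via strict convexity
(parallelogram law) and injectivity. -/
lemma unique_min {m n : ℕ} (A : Matrix (Fin m) (Fin n) ℝ)
    (hinj : Function.Injective A.mulVec) (b : Fin m → ℝ) (y z : Fin n → ℝ)
    (h1 : nrm (A *ᵥ y - b) ≤ nrm (A *ᵥ z - b))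
    (h2 : nrm (A *ᵥ z - b) ≤ nrm (A *ᵥ y - b))
    (h3 : nrm (A *ᵥ y - b) ≤ nrm (A *ᵥ ((1/2 : ℝ) • (y + z)) - b)) :
    y = z := by
  set u : Fin m → ℝ := A *ᵥ y - b with hu
  set v : Fin m → ℝ := A *ᵥ z - b with hv
  have hmid : A *ᵥ ((1/2 : ℝ) • (y + z)) - b = (1/2 : ℝ) • (u + v) := by
    funext i
    simp [hu, hv, Matrix.mulVec_smul, Matrix.mulVec_add]
    ring
  rw [hmid] at h3
  rw [nrm_le_nrm_iff] at h1 h2 h3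
  have heq : ∑ i, u i ^ 2 = ∑ i, v i ^ 2 := le_antisymm h1 h2
  have h3' : ∑ i, u i ^ 2 ≤ ∑ i, ((1/2 : ℝ) * (u i + v i)) ^ 2 := by
    simpa [Pi.smul_apply, smul_eq_mul] using h3
  have hzero : ∑ i, (u i - v i) ^ 2 ≤ 0 := by
    have expand : ∑ i, (u i - v i) ^ 2
        = 2 * ∑ i, u i ^ 2 + 2 * ∑ i, v i ^ 2 - 4 * ∑ i, ((1/2 : ℝ) * (u i + v i)) ^ 2 := by
      rw [Finset.mul_sum, Finset.mul_sum, Finset.mul_sum, ← Finset.sum_add_distrib,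
        ← Finset.sum_sub_distrib]
      apply Finset.sum_congr rfl
      intro i _
      ring
    rw [expand]
    nlinarith
  have huv : u = v := by
    funext i
    have hpos : ∀ i ∈ Finset.univ, (0:ℝ) ≤ (u i - v i) ^ 2 := fun i _ => sq_nonneg _
    have := (Finset.sum_eq_zero_iff_of_nonneg hpos).mp
      (le_antisymm hzero (Finset.sum_nonneg hpos)) i (Finset.mem_univ i)
    have : u i - v i = 0 := by nlinarith [this]
    linarith
  apply hinj
  have : A *ᵥ y = A *ᵥ z := by
    funext i
    have := congrFun huv i
    simp [hu, hv] at this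
    linarith
  exact this

/-- The SINDy iterative scheme converges in at most `n` steps:
there exists `M ≤ n` such that `x k = x (M+1)` for all `k ≥ M+1`. -/
theorem sindy_converges_in_n_steps {m n : ℕ} (hmn : n ≤ m)
    (A : Matrix (Fin m) (Fin n) ℝ) (hrank : A.rank = n)
    (b : Fin m → ℝ) (lam : ℝ) (hlam : 0 < lam)
    (x : ℕ → Fin n → ℝ) (S : ℕ → Finset (Fin n))
    (hx0 : x 0 = (Aᵀ * A)⁻¹ *ᵥ (Aᵀ *ᵥ b))
    (hS : ∀ k, S k = Finset.univ.filter (fun j => lam ≤ |x k j|))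
    (hsupp : ∀ k, spt (x (k + 1)) ⊆ S k)
    (hmin : ∀ k, ∀ y : Fin n → ℝ, spt y ⊆ S k →
      nrm (A *ᵥ x (k + 1) - b) ≤ nrm (A *ᵥ y - b)) :
    ∃ M ≤ n, ∀ k, M + 1 ≤ k → x k = x (M + 1) := by
  -- injectivity
  have hinj : Function.Injective A.mulVec := by
    have h := A.mulVecLin.finrank_range_add_finrank_ker
    rw [show Module.finrank ℝ (LinearMap.range A.mulVecLin) = A.rank from rfl, hrank] at h
    simp [Module.finrank_fintype_fun_eq_card] at h
    exact LinearMap.ker_eq_bot.mp h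
  -- S is decreasing
  have hdec : ∀ k, S (k + 1) ⊆ S k := by
    intro k j hj
    rw [hS (k+1), Finset.mem_filter] at hj
    apply hsupp k
    rw [spt, Finset.mem_filter]
    refine ⟨Finset.mem_univ _, ?_⟩
    intro h0
    rw [h0] at hj
    simp at hj
    linarith
  -- existence of M ≤ n with S M = S (M+1)
  have hexM : ∃ M ≤ n, S M = S (M + 1) := by
    by_contra hcon
    push_neg at hcon
    have key : ∀ k, k ≤ n + 1 → (S k).card + k ≤ n := by
      intro k hk
      induction k with
      | zero =>
        simpa using (Finset.card_le_card (Finset.subset_univ (S 0))).trans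
          (le_of_eq (by simp))
      | succ k ih =>
        have hk' : k ≤ n := by omega
        have hlt : (S (k+1)).card < (S k).card :=
          Finset.card_lt_card (Finset.ssubset_iff_subset_ne.mpr
            ⟨hdec k, fun h => hcon k hk' h.symm⟩)
        have := ih (by omega)
        omega
    have := key (n+1) le_rfl
    omega
  obtain ⟨M, hMn, hSM⟩ := hexM
  refine ⟨M, hMn, ?_⟩
  -- uniqueness of minimizer over same support set
  have huniq : ∀ k j : ℕ, S k = S j → x (k + 1) = x (j + 1) := by
    intro k j hkj
    apply unique_min A hinj b
    · exact hmin k _ (by rw [hkj]; exact hsupp j)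
    · exact hmin j _ (by rw [← hkj]; exact hsupp k)
    · apply hmin k
      intro i hi
      rw [spt, Finset.mem_filter] at hi
      have : x (k+1) i ≠ 0 ∨ x (j+1) i ≠ 0 := by
        by_contra hc
        push_neg at hc
        apply hi.2
        simp [hc.1, hc.2]
      rcases this with h | h
      · exact hsupp k (by rw [spt, Finset.mem_filter]; exact ⟨Finset.mem_univ _, h⟩)
      · rw [hkj]; exact hsupp j (by rw [spt, Finset.mem_filter]; exact ⟨Finset.mem_univ _, h⟩)
  -- main induction: S k = S M for all k ≥ M
  have hSconst : ∀ k, M ≤ k → S k = S M := by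
    intro k hk
    induction k with
    | zero =>
      have : M = 0 := by omega
      rw [this]
    | succ k ih =>
      rcases Nat.lt_or_ge M (k+1) with h | h
      · have hMk : M ≤ k := by omega
        have hSk : S k = S M := ih hMk
        have hx : x (k+1) = x (M+1) := huniq k M hSk
        rw [hS (k+1), hx, ← hS (M+1)]
        exact hSM.symm
      · have : M = k + 1 := by omega
        rw [this]
  intro k hk
  obtain ⟨j, rfl⟩ : ∃ j, k = j + 1 := ⟨k - 1, by omega⟩
  exact huniq j M (hSconst j (by omega))
end

section
/- The sum of squared consecutive differences of SINDy iterates is finite: Σ_{k≥1} ‖x^{k+1} − x^k‖₂² ≤ ‖b‖₂² / λ₀, where λ₀ > 0 is the smallest eigenvalue of AᵀA. -/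
open Matrix
open scoped Matrix.Norms.L2Operator

lemma quad_zero (c q : ℝ) (hq : 0 ≤ q) (h : ∀ t : ℝ, 0 ≤ 2*t*c + t^2*q) : c = 0 := by
  have hq1 : (0:ℝ) < q + 1 := by linarith
  set t0 : ℝ := -c / (q+1) with ht0def
  have ht0 : t0 * (q+1) = -c := div_mul_cancel₀ _ (ne_of_gt hq1)
  have h1 := h t0
  have hc2 : c ^ 2 ≤ 0 := by nlinarith [sq_nonneg t0, sq_nonneg (t0*(q+1))]
  have := sq_nonneg c
  nlinarith

lemma rayleigh {n : ℕ} (M : Matrix (Fin n) (Fin n) ℝ) (hM : M.IsHermitian) (lam0 : ℝ)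
    (hlb : ∀ i, lam0 ≤ hM.eigenvalues i) (z : Fin n → ℝ) :
    lam0 * (z ⬝ᵥ z) ≤ z ⬝ᵥ (M *ᵥ z) := by
  have hps : (M - lam0 • 1).PosSemidef := by
    have hspec := hM.spectral_theorem
    set U : Matrix (Fin n) (Fin n) ℝ := (hM.eigenvectorUnitary : Matrix (Fin n) (Fin n) ℝ) with hU
    have hUU : U * star U = 1 := (Matrix.mem_unitaryGroup_iff).mp hM.eigenvectorUnitary.2
    have hid : M - lam0 • 1 = U * (diagonal (fun i => hM.eigenvalues i - lam0)) * star U := by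
      have h1 : (lam0 • (1 : Matrix (Fin n) (Fin n) ℝ)) = U * (lam0 • 1) * star U := by
        rw [Matrix.mul_smul, Matrix.smul_mul, mul_one, hUU]
      calc M - lam0 • 1 = U * diagonal (RCLike.ofReal ∘ hM.eigenvalues) * star U - U * (lam0 • 1) * star U := by
            rw [← h1]; exact congrArg (fun X => X - lam0 • 1) hspec
        _ = U * (diagonal (RCLike.ofReal ∘ hM.eigenvalues) - lam0 • 1) * star U := by
            noncomm_ring
        _ = U * (diagonal (fun i => hM.eigenvalues i - lam0)) * star U := by
            congr 1
            congr 1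
            rw [Matrix.smul_one_eq_diagonal, Matrix.diagonal_sub]
            rfl
    rw [hid]
    exact (Matrix.posSemidef_diagonal_iff.mpr (fun i => by simpa using sub_nonneg.mpr (hlb i))).mul_mul_conjTranspose_same U
  have h2 := (posSemidef_iff_dotProduct_mulVec.mp hps).2 z
  simp only [star_trivial] at h2
  rw [Matrix.sub_mulVec, dotProduct_sub, Matrix.smul_mulVec, Matrix.one_mulVec,
    dotProduct_smul, smul_eq_mul] at h2
  linarith [h2]

lemma nrm_nonneg' {ι : Type*} [Fintype ι] (v : ι → ℝ) : 0 ≤ nrm v := Real.sqrt_nonneg _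

lemma nrm_sq_eq {ι : Type*} [Fintype ι] (v : ι → ℝ) : nrm v ^ 2 = ∑ i, v i ^ 2 :=
  Real.sq_sqrt (Finset.sum_nonneg fun _ _ => sq_nonneg _)

/-- The sum of squared consecutive differences of SINDy iterates is finite:
`Σ_{k≥1} ‖x^{k+1} − x^k‖₂² ≤ ‖b‖₂² / λ₀`, where `λ₀ > 0` is the smallest eigenvalue
of `AᵀA`. -/
theorem sindy_square_summable {m n : ℕ} (hmn : n ≤ m)
    (A : Matrix (Fin m) (Fin n) ℝ) (hrank : A.rank = n)
    (b : Fin m → ℝ) (lam : ℝ) (hlam : 0 < lam)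
    (lam0 : ℝ)
    (hlam0 : IsLeast (Set.range (show (Aᵀ * A).IsHermitian by
      simpa using Matrix.isHermitian_conjTranspose_mul_self A).eigenvalues) lam0)
    (x : ℕ → Fin n → ℝ) (S : ℕ → Finset (Fin n))
    (hx0 : x 0 = (Aᵀ * A)⁻¹ *ᵥ (Aᵀ *ᵥ b))
    (hS : ∀ k, S k = Finset.univ.filter (fun j => lam ≤ |x k j|))
    (hsupp : ∀ k, spt (x (k + 1)) ⊆ S k)
    (hmin : ∀ k, ∀ y : Fin n → ℝ, spt y ⊆ S k →
      nrm (A *ᵥ x (k + 1) - b) ≤ nrm (A *ᵥ y - b)) :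
    (Summable fun k : ℕ => nrm (x (k + 1 + 1) - x (k + 1)) ^ 2) ∧
    (∑' k : ℕ, nrm (x (k + 1 + 1) - x (k + 1)) ^ 2) ≤ nrm b ^ 2 / lam0 := by
  classical
  have hM : (Aᵀ * A).IsHermitian := by simpa using Matrix.isHermitian_conjTranspose_mul_self A
  -- injectivity of mulVec
  have hker : LinearMap.ker A.mulVecLin = ⊥ := by
    have hrn := A.mulVecLin.finrank_range_add_finrank_ker
    have hd : Module.finrank ℝ (Fin n → ℝ) = n := Module.finrank_fin_fun ℝ
    rw [hd] at hrn
    have hr : Module.finrank ℝ (LinearMap.range A.mulVecLin) = n := hrank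
    rw [hr] at hrn
    have : Module.finrank ℝ (LinearMap.ker A.mulVecLin) = 0 := by omega
    exact Submodule.finrank_eq_zero.mp this
  have hAz_ne : ∀ z : Fin n → ℝ, z ≠ 0 → A *ᵥ z ≠ 0 := by
    intro z hz h
    apply hz
    apply LinearMap.ker_eq_bot.mp hker
    simp [Matrix.mulVecLin_apply, h]
  -- positive definiteness
  have hpd : (Aᵀ * A).PosDef := by
    refine posDef_iff_dotProduct_mulVec.mpr ⟨hM, fun z hz => ?_⟩
    have h1 : star z ⬝ᵥ ((Aᵀ * A) *ᵥ z) = (A *ᵥ z) ⬝ᵥ (A *ᵥ z) := by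
      rw [star_trivial, ← Matrix.mulVec_mulVec, Matrix.dotProduct_mulVec, Matrix.vecMul_transpose]
    rw [h1]
    have := Matrix.dotProduct_self_star_pos_iff (v := A *ᵥ z) |>.mpr (hAz_ne z hz)
    simpa using this
  have hlam0pos : 0 < lam0 := by
    obtain ⟨i, hi⟩ := hlam0.1
    rw [← hi]
    exact hpd.eigenvalues_pos i
  have hlb : ∀ i, lam0 ≤ hM.eigenvalues i := fun i => hlam0.2 ⟨i, rfl⟩
  have hRay : ∀ z : Fin n → ℝ, lam0 * ∑ j, z j ^ 2 ≤ ∑ i, (A *ᵥ z) i ^ 2 := by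
    intro z
    have h := rayleigh (Aᵀ * A) hM lam0 hlb z
    have e1 : z ⬝ᵥ z = ∑ j, z j ^ 2 := by simp [dotProduct, sq]
    have e2 : z ⬝ᵥ ((Aᵀ * A) *ᵥ z) = ∑ i, (A *ᵥ z) i ^ 2 := by
      rw [← Matrix.mulVec_mulVec, Matrix.dotProduct_mulVec, Matrix.vecMul_transpose]
      simp [dotProduct, sq]
    rw [e1, e2] at h
    exact h
  -- monotonicity of supports
  have hmem : ∀ k j, j ∈ S k ↔ lam ≤ |x k j| := by
    intro k j; rw [hS k]; simp
  have hSmono : ∀ k, S (k+1) ⊆ S k := by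
    intro k j hj
    rw [hmem] at hj
    apply hsupp k
    simp only [spt, Finset.mem_filter, Finset.mem_univ, true_and]
    intro h0
    rw [h0] at hj
    simp at hj
    linarith
  -- orthogonality
  have hortho : ∀ k (z : Fin n → ℝ), spt z ⊆ S k →
      (∑ i, (A *ᵥ x (k+1) - b) i * (A *ᵥ z) i) = 0 := by
    intro k z hz
    set r := A *ᵥ x (k+1) - b with hr
    set w := A *ᵥ z with hw
    apply quad_zero _ (∑ i, w i ^ 2) (Finset.sum_nonneg fun _ _ => sq_nonneg _)
    intro t
    have hsub : spt (x (k+1) + t • z) ⊆ S k := by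
      intro j hj
      simp only [spt, Finset.mem_filter, Finset.mem_univ, true_and] at hj
      by_cases h1 : x (k+1) j = 0
      · apply hz
        simp only [spt, Finset.mem_filter, Finset.mem_univ, true_and]
        intro h2
        exact hj (by simp [h1, h2])
      · exact hsupp k (by simp [spt, h1])
    have hle := hmin k _ hsub
    have heq : A *ᵥ (x (k+1) + t • z) - b = r + t • w := by
      rw [Matrix.mulVec_add, Matrix.mulVec_smul]
      funext i
      simp [hr, hw]
      ring
    rw [heq] at hle
    have h2 : nrm r ^ 2 ≤ nrm (r + t • w) ^ 2 := pow_le_pow_left₀ (nrm_nonneg' r) hle 2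
    rw [nrm_sq_eq, nrm_sq_eq] at h2
    have hexp : ∑ i, (r + t • w) i ^ 2
        = ∑ i, r i ^ 2 + (2*t*(∑ i, r i * w i) + t^2*(∑ i, w i ^ 2)) := by
      have expand : ∀ i : Fin m, (r + t • w) i ^ 2
          = r i ^ 2 + ((2*t)*(r i * w i) + (t^2)*(w i ^ 2)) := by
        intro i
        simp only [Pi.add_apply, Pi.smul_apply, smul_eq_mul]
        ring
      rw [Finset.sum_congr rfl fun i _ => expand i, Finset.sum_add_distrib,
        Finset.sum_add_distrib, ← Finset.mul_sum, ← Finset.mul_sum]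
    rw [hexp] at h2
    linarith
  -- residual sums
  set R : ℕ → ℝ := fun k => ∑ i, (A *ᵥ x (k+1) - b) i ^ 2 with hRdef
  set Q : ℕ → ℝ := fun k => ∑ i, (A *ᵥ (x (k+1+1) - x (k+1))) i ^ 2 with hQdef
  have key : ∀ k, R (k+1) = R k + Q k := by
    intro k
    have hd : spt (x (k+1+1) - x (k+1)) ⊆ S k := by
      intro j hj
      simp only [spt, Finset.mem_filter, Finset.mem_univ, true_and, Pi.sub_apply] at hj
      by_cases h1 : x (k+1) j = 0
      · have h2 : x (k+1+1) j ≠ 0 := by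
          intro h; exact hj (by rw [h, h1, sub_zero])
        exact hSmono k (hsupp (k+1) (by simp [spt, h2]))
      · exact hsupp k (by simp [spt, h1])
    have hc := hortho k _ hd
    have heq : A *ᵥ x (k+1+1) - b = (A *ᵥ x (k+1) - b) + A *ᵥ (x (k+1+1) - x (k+1)) := by
      rw [Matrix.mulVec_sub]
      funext i
      simp only [Pi.add_apply, Pi.sub_apply]
      ring
    show (∑ i, (A *ᵥ x (k+1+1) - b) i ^ 2)
        = (∑ i, (A *ᵥ x (k+1) - b) i ^ 2) + ∑ i, (A *ᵥ (x (k+1+1) - x (k+1))) i ^ 2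
    rw [heq]
    have expand : ∀ i : Fin m, ((A *ᵥ x (k+1) - b) + A *ᵥ (x (k+1+1) - x (k+1))) i ^ 2
        = (A *ᵥ x (k+1) - b) i ^ 2
          + (2 * ((A *ᵥ x (k+1) - b) i * (A *ᵥ (x (k+1+1) - x (k+1))) i)
            + (A *ᵥ (x (k+1+1) - x (k+1))) i ^ 2) := by
      intro i
      simp only [Pi.add_apply]
      ring
    rw [Finset.sum_congr rfl fun i _ => expand i, Finset.sum_add_distrib,
      Finset.sum_add_distrib, ← Finset.mul_sum, hc]
    ring
  have hR0 : 0 ≤ R 0 := Finset.sum_nonneg fun _ _ => sq_nonneg _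
  have hRb : ∀ N, R N ≤ ∑ i, b i ^ 2 := by
    intro N
    have h0 : spt (0 : Fin n → ℝ) ⊆ S N := by
      intro j hj; simp [spt] at hj
    have hle := hmin N 0 h0
    have heq : A *ᵥ (0 : Fin n → ℝ) - b = -b := by simp
    rw [heq] at hle
    have h2 := pow_le_pow_left₀ (nrm_nonneg' _) hle 2
    rw [nrm_sq_eq, nrm_sq_eq] at h2
    simpa [hRdef] using h2
  have htel : ∀ N, ∑ k ∈ Finset.range N, Q k = R N - R 0 := by
    intro N
    calc ∑ k ∈ Finset.range N, Q k = ∑ k ∈ Finset.range N, (R (k+1) - R k) :=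
          Finset.sum_congr rfl fun k _ => by rw [key k]; ring
      _ = R N - R 0 := Finset.sum_range_sub R N
  have hbsq : nrm b ^ 2 = ∑ i, b i ^ 2 := nrm_sq_eq b
  have hps : ∀ N, ∑ k ∈ Finset.range N, nrm (x (k+1+1) - x (k+1)) ^ 2 ≤ nrm b ^ 2 / lam0 := by
    intro N
    have h1 : lam0 * ∑ k ∈ Finset.range N, nrm (x (k+1+1) - x (k+1)) ^ 2
        ≤ ∑ k ∈ Finset.range N, Q k := by
      rw [Finset.mul_sum]
      apply Finset.sum_le_sum
      intro k _
      rw [nrm_sq_eq]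
      exact hRay _
    have h2 : ∑ k ∈ Finset.range N, Q k ≤ nrm b ^ 2 := by
      rw [htel N, hbsq]
      linarith [hRb N]
    rw [le_div_iff₀ hlam0pos, mul_comm]
    linarith
  exact ⟨summable_of_sum_range_le (fun k => sq_nonneg _) hps,
    Real.tsum_le_of_sum_range_le (fun k => sq_nonneg _) hps⟩
end

section
/- A fixed point x* of the SINDy scheme satisfies: (Aᵀ(Ax*−b))_j = 0 for all j ∈ supp(x*), and x*_j ≠ 0 if and only if |x*_j| ≥ λ. -/
open Matrix
open scoped Matrix.Norms.L2Operator

/-- A fixed point `x*` of the SINDy scheme satisfies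
`(Aᵀ(Ax*−b))_j = 0` for all `j ∈ supp x*`, and `x*_j ≠ 0 ↔ |x*_j| ≥ λ`. -/
theorem sindy_fixed_point_properties {m n : ℕ}
    (A : Matrix (Fin m) (Fin n) ℝ) (hrank : A.rank = n)
    (b : Fin m → ℝ) (lam : ℝ) (hlam : 0 < lam)
    (xstar : Fin n → ℝ) (Sstar : Finset (Fin n))
    (hSstar : Sstar = Finset.univ.filter (fun j => lam ≤ |xstar j|))
    (hsupp : spt xstar ⊆ Sstar)
    (hmin : ∀ y : Fin n → ℝ, spt y ⊆ Sstar →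
      nrm (A *ᵥ xstar - b) ≤ nrm (A *ᵥ y - b)) :
    (∀ j ∈ spt xstar, (Aᵀ *ᵥ (A *ᵥ xstar - b)) j = 0) ∧
    (∀ j, xstar j ≠ 0 ↔ lam ≤ |xstar j|) := by
  constructor
  · intro j hj
    set r : Fin m → ℝ := A *ᵥ xstar - b with hr
    set c : ℝ := ∑ i, A i j * r i with hc
    have hceq : (Aᵀ *ᵥ (A *ᵥ xstar - b)) j = c := by
      simp [Matrix.mulVec, Matrix.transpose, dotProduct, hc, hr]
    set a : ℝ := ∑ i, (A i j) ^ 2 with ha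
    have ha0 : 0 ≤ a := Finset.sum_nonneg fun i _ => sq_nonneg _
    set t : ℝ := -c / (a + 1) with ht
    set y : Fin n → ℝ := fun k => xstar k + if k = j then t else 0 with hy
    have hspt : spt y ⊆ Sstar := by
      intro k hk
      simp only [spt, Finset.mem_filter, Finset.mem_univ, true_and] at hk
      by_cases hkj : k = j
      · exact hkj ▸ hsupp hj
      · apply hsupp
        simp only [spt, Finset.mem_filter, Finset.mem_univ, true_and]
        simpa [hy, hkj] using hk
    have key := hmin y hspt
    have hAy : ∀ i, (A *ᵥ y - b) i = r i + A i j * t := by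
      intro i
      simp only [hy, hr, Matrix.mulVec, dotProduct, Pi.sub_apply, mul_add]
      rw [Finset.sum_add_distrib]
      have : ∑ k, A i k * (if k = j then t else 0) = A i j * t := by
        rw [Finset.sum_eq_single j]
        · simp
        · intro k _ hk; simp [hk]
        · simp
      rw [this]; ring
    have hsq : ∑ i, (r i) ^ 2 ≤ ∑ i, ((A *ᵥ y - b) i) ^ 2 := by
      have h1 : (0:ℝ) ≤ ∑ i, ((A *ᵥ y - b) i) ^ 2 :=
        Finset.sum_nonneg fun i _ => sq_nonneg _
      have := key
      rw [nrm, nrm] at this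
      exact (Real.sqrt_le_sqrt_iff h1).mp this
    have hexp : ∑ i, ((A *ᵥ y - b) i) ^ 2
        = (∑ i, (r i) ^ 2) + 2 * t * c + t ^ 2 * a := by
      have : ∀ i, ((A *ᵥ y - b) i) ^ 2
          = (r i) ^ 2 + 2 * t * (A i j * r i) + t ^ 2 * (A i j) ^ 2 := by
        intro i; rw [hAy i]; ring
      simp only [this, Finset.sum_add_distrib, ← Finset.mul_sum, hc, ha]
    rw [hexp] at hsq
    have h2 : 0 ≤ 2 * t * c + t ^ 2 * a := by linarith
    have hap : (0:ℝ) < a + 1 := by linarith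
    have hc0 : c = 0 := by
      have hne : a + 1 ≠ 0 := ne_of_gt hap
      have heq : (2 * t * c + t ^ 2 * a) * (a + 1) ^ 2 = -(c ^ 2 * (a + 2)) := by
        rw [ht]; field_simp; ring
      have h3 : 0 ≤ (2 * t * c + t ^ 2 * a) * (a + 1) ^ 2 :=
        mul_nonneg h2 (sq_nonneg _)
      rw [heq] at h3
      have h5 : 0 ≤ c ^ 2 * (a + 2) :=
        mul_nonneg (sq_nonneg c) (by linarith)
      have h6 : c ^ 2 * (a + 2) = 0 := le_antisymm (by linarith) h5
      have hc2 : c ^ 2 = 0 := by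
        rcases mul_eq_zero.mp h6 with h | h
        · exact h
        · linarith
      exact sq_eq_zero_iff.mp hc2
    rw [hceq, hc0]
  · intro j
    constructor
    · intro hne
      have : j ∈ spt xstar := by
        simp [spt, hne]
      have := hsupp this
      rw [hSstar] at this
      simpa using this
    · intro hle
      intro h0
      rw [h0] at hle
      simp at hle
      linarith
end

section
/- Every global minimizer of F(x) = ‖Ax−b‖₂² + λ²‖x‖₀ is a fixed point of the SINDy scheme: if x^g is a global minimizer, then with S = {j : |x^g_j| ≥ λ}, supp(x^g) = S and x^g = argmin{‖Ax−b‖₂ : supp(x) ⊆ S}. -/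
open Matrix
open scoped Matrix.Norms.L2Operator

/-- Every global minimizer of `F x = ‖Ax−b‖₂² + λ²‖x‖₀` is a fixed
point of the SINDy scheme: with `S = {j : |x^g_j| ≥ λ}`, `supp x^g = S` and `x^g` is
the minimizer of `‖Ax−b‖₂` over `supp x ⊆ S`. -/
theorem global_min_is_fixed_point {m n : ℕ} (hmn : n ≤ m)
    (A : Matrix (Fin m) (Fin n) ℝ) (hrank : A.rank = n) (hA : ‖A‖ = 1)
    (b : Fin m → ℝ) (lam : ℝ) (hlam : 0 < lam)
    (F : (Fin n → ℝ) → ℝ)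
    (hF : ∀ y, F y = nrm (A *ᵥ y - b) ^ 2 + lam ^ 2 * (spt y).card)
    (xg : Fin n → ℝ) (hglobal : ∀ y : Fin n → ℝ, F xg ≤ F y) :
    spt xg = Finset.univ.filter (fun j => lam ≤ |xg j|) ∧
    (∀ y : Fin n → ℝ, spt y ⊆ Finset.univ.filter (fun j => lam ≤ |xg j|) →
      nrm (A *ᵥ xg - b) ≤ nrm (A *ᵥ y - b)) := by
  classical
  have hn2 : ∀ {ι : Type} [Fintype ι] (v : ι → ℝ), nrm v ^ 2 = ∑ i, v i ^ 2 := by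
    intro ι _ v
    exact Real.sq_sqrt (Finset.sum_nonneg fun i _ => sq_nonneg _)
  -- column norm bound
  have hcol : ∀ j : Fin n, ∑ i, (A i j) ^ 2 ≤ 1 := by
    intro j
    have h := A.l2_opNorm_mulVec (EuclideanSpace.single j (1 : ℝ))
    rw [EuclideanSpace.norm_single, hA, one_mul, norm_one] at h
    have hLHS : ‖(EuclideanSpace.equiv (Fin m) ℝ).symm (A *ᵥ EuclideanSpace.single j (1 : ℝ))‖
        = Real.sqrt (∑ i, (A i j) ^ 2) := by
      rw [EuclideanSpace.norm_eq]
      congr 1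
      apply Finset.sum_congr rfl
      intro i _
      have hv : (A *ᵥ (EuclideanSpace.single j (1 : ℝ) : EuclideanSpace ℝ (Fin n))) i
          = A i j := by
        simp [mulVec, dotProduct, EuclideanSpace.single_apply, mul_ite]
      simp [Real.norm_eq_abs, hv, sq_abs]
    rw [hLHS] at h
    have h0 : 0 ≤ ∑ i, (A i j) ^ 2 := Finset.sum_nonneg fun i _ => sq_nonneg _
    nlinarith [Real.sq_sqrt h0, Real.sqrt_nonneg (∑ i, (A i j) ^ 2)]
  set r : Fin m → ℝ := A *ᵥ xg - b with hr
  have hupd : ∀ (j : Fin n) (t : ℝ), A *ᵥ Function.update xg j t - b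
      = fun i => r i + (t - xg j) * A i j := by
    intro j t
    have hu : Function.update xg j t = xg + (t - xg j) • (Pi.single j 1 : Fin n → ℝ) := by
      ext k; by_cases h : k = j <;> simp [Function.update_apply, h, Pi.single_apply]
    rw [hu, mulVec_add, mulVec_smul, mulVec_single]
    ext i
    simp [hr]
    ring
  have hexp : ∀ (j : Fin n) (s : ℝ), ∑ i, (r i + s * A i j) ^ 2
      = (∑ i, r i ^ 2) + 2 * s * (∑ i, A i j * r i) + s ^ 2 * (∑ i, (A i j) ^ 2) := by
    intro j s
    rw [Finset.mul_sum, Finset.mul_sum, ← Finset.sum_add_distrib, ← Finset.sum_add_distrib]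
    apply Finset.sum_congr rfl
    intro i _; ring
  have hspt_ne : ∀ (j : Fin n) (t : ℝ), xg j ≠ 0 → t ≠ 0 →
      spt (Function.update xg j t) = spt xg := by
    intro j t hx ht; ext k
    simp only [spt, Finset.mem_filter, Finset.mem_univ, true_and, Function.update_apply]
    by_cases h : k = j <;> simp [h, ht, hx]
  have hspt0 : ∀ j : Fin n, spt (Function.update xg j 0) = (spt xg).erase j := by
    intro j; ext k
    simp only [spt, Finset.mem_erase, Finset.mem_filter, Finset.mem_univ, true_and,
      Function.update_apply]
    by_cases h : k = j <;> simp [h]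
  -- key: on the support, |xg j| ≥ lam
  have key : ∀ j : Fin n, xg j ≠ 0 → lam ≤ |xg j| := by
    intro j hxj
    set c := xg j with hc
    set P := ∑ i, A i j * r i with hP
    set Q := ∑ i, (A i j) ^ 2 with hQ
    have hQ0 : 0 ≤ Q := Finset.sum_nonneg fun i _ => sq_nonneg _
    have hQ1 : Q ≤ 1 := hcol j
    have hjmem : j ∈ spt xg := by
      simp only [spt, Finset.mem_filter, Finset.mem_univ, true_and]; exact hxj
    -- perturbation inequality for s ≠ -c
    have step : ∀ s : ℝ, s ≠ -c → 0 ≤ 2 * s * P + s ^ 2 * Q := by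
      intro s hs
      have ht : s + c ≠ 0 := fun hh => hs (by linarith)
      have h := hglobal (Function.update xg j (s + c))
      rw [hF, hF, hupd j (s + c), hspt_ne j (s + c) hxj ht] at h
      rw [hn2, hn2] at h
      have hsc : s + c - c = s := by ring
      rw [show (∑ i, (fun i => r i + (s + c - xg j) * A i j) i ^ 2)
            = ∑ i, (r i + s * A i j) ^ 2 by
          apply Finset.sum_congr rfl; intro i _; rw [← hc, hsc]] at h
      rw [hexp j s] at h
      rw [← hP, ← hQ] at h
      have hrfl : ∑ i, (A *ᵥ xg - b) i ^ 2 = ∑ i, r i ^ 2 := rfl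
      rw [hrfl] at h
      linarith
    -- show P = 0
    have hPzero : P = 0 := by
      by_contra hP0
      have hP2' : 0 < P ^ 2 := by positivity
      have hq1 : (0 : ℝ) < Q + 1 := by linarith
      have hval : ∀ d : ℝ, 0 < d → d * Q < 2 → 2 * (-P * d) * P + (-P * d) ^ 2 * Q < 0 := by
        intro d hd hdq
        have hpos : 0 < d * P ^ 2 * (2 - d * Q) :=
          mul_pos (mul_pos hd hP2') (by linarith)
        nlinarith [hpos]
      set d1 : ℝ := 1 / (Q + 1) with hd1
      set d2 : ℝ := 1 / (2 * (Q + 1)) with hd2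
      have hd1pos : 0 < d1 := by positivity
      have hd2pos : 0 < d2 := by positivity
      have hd1q : d1 * Q < 2 := by
        rw [hd1, div_mul_eq_mul_div, div_lt_iff₀ hq1]; nlinarith
      have hd2q : d2 * Q < 2 := by
        rw [hd2, div_mul_eq_mul_div, div_lt_iff₀ (by positivity : (0:ℝ) < 2 * (Q + 1))]
        nlinarith
      have hdne : d1 ≠ d2 := by
        intro hh
        rw [hd1, hd2, div_eq_div_iff hq1.ne' (by positivity : (0:ℝ) < 2*(Q+1)).ne'] at hh
        linarith
      rcases eq_or_ne (-P * d1) (-c) with h1 | h1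
      · have h2 : -P * d2 ≠ -c := by
          rw [← h1]
          intro hh
          have : P * (d1 - d2) = 0 := by ring_nf; ring_nf at hh; linarith
          rcases mul_eq_zero.mp this with h | h
          · exact hP0 h
          · exact hdne (by linarith)
        exact absurd (step (-P * d2) h2) (not_le.mpr (hval d2 hd2pos hd2q))
      · exact absurd (step (-P * d1) h1) (not_le.mpr (hval d1 hd1pos hd1q))
    -- compare with setting coordinate j to zero
    have h0 := hglobal (Function.update xg j 0)
    rw [hF, hF, hupd j 0, hspt0 j] at h0
    rw [hn2, hn2] at h0
    have hcard : (spt xg).card = ((spt xg).erase j).card + 1 :=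
      (Finset.card_erase_add_one hjmem).symm
    rw [show (∑ i, (fun i => r i + (0 - xg j) * A i j) i ^ 2)
          = ∑ i, (r i + (-c) * A i j) ^ 2 by
        apply Finset.sum_congr rfl; intro i _; rw [← hc]; ring_nf] at h0
    rw [hexp j (-c), ← hP, ← hQ] at h0
    rw [hcard] at h0
    have hrfl : ∑ i, (A *ᵥ xg - b) i ^ 2 = ∑ i, r i ^ 2 := rfl
    rw [hrfl] at h0
    push_cast at h0
    rw [hPzero] at h0
    have hlc : lam ^ 2 ≤ c ^ 2 * Q := by nlinarith [h0]
    have hc2 : lam ^ 2 ≤ c ^ 2 := by nlinarith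
    nlinarith [abs_nonneg c, sq_abs c]
  have hset : spt xg = Finset.univ.filter (fun j => lam ≤ |xg j|) := by
    ext j
    simp only [spt, Finset.mem_filter, Finset.mem_univ, true_and]
    constructor
    · intro hj; exact key j hj
    · intro hj h0
      rw [h0] at hj
      simp at hj
      linarith
  refine ⟨hset, ?_⟩
  intro y hy
  rw [← hset] at hy
  have hcard : (spt y).card ≤ (spt xg).card := Finset.card_le_card hy
  have h := hglobal y
  rw [hF, hF] at h
  have hmono : (lam : ℝ) ^ 2 * (spt y).card ≤ lam ^ 2 * (spt xg).card := by
    apply mul_le_mul_of_nonneg_left _ (sq_nonneg _)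
    exact_mod_cast hcard
  have hsq : nrm (A *ᵥ xg - b) ^ 2 ≤ nrm (A *ᵥ y - b) ^ 2 := by linarith
  have h0 : 0 ≤ nrm (A *ᵥ xg - b) := Real.sqrt_nonneg _
  have h1 : 0 ≤ nrm (A *ᵥ y - b) := Real.sqrt_nonneg _
  nlinarith
end

section
/- Suppose the differences of SINDy iterates satisfy ‖x^{k+1} − x^k‖₂ < λ/3 for all k ≥ N. Then the support sets are stationary for k ≥ N: S^{k+1} = S^k for all k ≥ N, and hence the iterates converge to a fixed point. -/
open Matrix
open scoped Matrix.Norms.L2Operator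

lemma abs_le_nrm {n : ℕ} (v : Fin n → ℝ) (j : Fin n) : |v j| ≤ nrm v := by
  rw [nrm, ← Real.sqrt_sq_eq_abs]
  exact Real.sqrt_le_sqrt (Finset.single_le_sum (fun i _ => sq_nonneg (v i)) (Finset.mem_univ j))

lemma nrm_le_iff {n : ℕ} (u v : Fin n → ℝ) :
    nrm u ≤ nrm v ↔ ∑ i, u i ^ 2 ≤ ∑ i, v i ^ 2 := by
  rw [nrm, nrm, Real.sqrt_le_sqrt_iff (Finset.sum_nonneg fun i _ => sq_nonneg _)]

lemma inj_of_rank {m n : ℕ} {A : Matrix (Fin m) (Fin n) ℝ} (h : A.rank = n) :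
    Function.Injective A.mulVec := by
  rw [← Matrix.coe_mulVecLin]
  rw [← LinearMap.ker_eq_bot]
  have hrn := LinearMap.finrank_range_add_finrank_ker A.mulVecLin
  rw [show Module.finrank ℝ (LinearMap.range A.mulVecLin) = A.rank from rfl, h] at hrn
  simp only [Module.finrank_fintype_fun_eq_card, Fintype.card_fin] at hrn
  have : Module.finrank ℝ (LinearMap.ker A.mulVecLin) = 0 := by omega
  exact Submodule.finrank_eq_zero.mp this

lemma lsq_unique {m n : ℕ} {A : Matrix (Fin m) (Fin n) ℝ} (hA : Function.Injective A.mulVec)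
    (b : Fin m → ℝ) (T : Finset (Fin n)) (y1 y2 : Fin n → ℝ)
    (h1 : spt y1 ⊆ T) (h2 : spt y2 ⊆ T)
    (hm1 : ∀ y, spt y ⊆ T → nrm (A *ᵥ y1 - b) ≤ nrm (A *ᵥ y - b))
    (hm2 : ∀ y, spt y ⊆ T → nrm (A *ᵥ y2 - b) ≤ nrm (A *ᵥ y - b)) :
    y1 = y2 := by
  set e1 : Fin m → ℝ := A *ᵥ y1 - b with he1
  set e2 : Fin m → ℝ := A *ᵥ y2 - b with he2
  set z : Fin n → ℝ := fun j => (y1 j + y2 j) / 2 with hz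
  have hzT : spt z ⊆ T := by
    intro j hj
    simp only [spt, Finset.mem_filter, Finset.mem_univ, true_and, hz] at hj
    by_cases h1j : y1 j = 0
    · refine h2 ?_
      simp only [spt, Finset.mem_filter, Finset.mem_univ, true_and]
      intro h2j
      exact hj (by rw [h1j, h2j]; norm_num)
    · exact h1 (by simp only [spt, Finset.mem_filter, Finset.mem_univ, true_and]; exact h1j)
  have hez : ∀ i, (A *ᵥ z - b) i = (e1 i + e2 i) / 2 := by
    have hz2 : z = (2:ℝ)⁻¹ • (y1 + y2) := by funext j; simp [hz]; ring
    intro i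
    rw [he1, he2, hz2, Matrix.mulVec_smul, Matrix.mulVec_add]
    simp [Pi.sub_apply]
    ring
  have heq : ∑ i, e1 i ^ 2 = ∑ i, e2 i ^ 2 :=
    le_antisymm ((nrm_le_iff _ _).1 (hm1 y2 h2)) ((nrm_le_iff _ _).1 (hm2 y1 h1))
  have hz_ge : ∑ i, e1 i ^ 2 ≤ ∑ i, ((e1 i + e2 i) / 2) ^ 2 := by
    have := (nrm_le_iff _ _).1 (hm1 z hzT)
    calc ∑ i, e1 i ^ 2 ≤ ∑ i, ((A *ᵥ z - b) i) ^ 2 := this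
      _ = ∑ i, ((e1 i + e2 i) / 2) ^ 2 := Finset.sum_congr rfl fun i _ => by rw [hez i]
  have par : ∑ i, (e1 i - e2 i) ^ 2 / 2
      = (∑ i, e1 i ^ 2) + (∑ i, e2 i ^ 2) - 2 * ∑ i, ((e1 i + e2 i) / 2) ^ 2 := by
    rw [Finset.mul_sum, ← Finset.sum_add_distrib, ← Finset.sum_sub_distrib]
    exact Finset.sum_congr rfl fun i _ => by ring
  have hsum0 : ∑ i, (e1 i - e2 i) ^ 2 / 2 = 0 := by
    have hle : ∑ i, (e1 i - e2 i) ^ 2 / 2 ≤ 0 := by rw [par]; linarith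
    have hge : (0:ℝ) ≤ ∑ i, (e1 i - e2 i) ^ 2 / 2 :=
      Finset.sum_nonneg fun i _ => by positivity
    linarith
  have hcoord : ∀ i, e1 i = e2 i := by
    intro i
    have := (Finset.sum_eq_zero_iff_of_nonneg (fun i _ => by positivity)).1 hsum0 i
      (Finset.mem_univ i)
    have h2 : (e1 i - e2 i) ^ 2 = 0 := by linarith [this]
    have := pow_eq_zero_iff (n := 2) (by norm_num) |>.1 h2
    linarith
  apply hA
  funext i
  have := hcoord i
  simp only [he1, he2, Pi.sub_apply] at this
  linarith

/-- If the differences of SINDy iterates satisfy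
`‖x^{k+1} − x^k‖₂ < λ/3` for all `k ≥ N`, then the support sets are stationary for
`k ≥ N` and the iterates converge to a fixed point. -/
theorem sindy_small_steps_imply_stationarity {m n : ℕ}
    (A : Matrix (Fin m) (Fin n) ℝ) (hrank : A.rank = n)
    (b : Fin m → ℝ) (lam : ℝ) (hlam : 0 < lam)
    (x : ℕ → Fin n → ℝ) (S : ℕ → Finset (Fin n))
    (hx0 : x 0 = (Aᵀ * A)⁻¹ *ᵥ (Aᵀ *ᵥ b))
    (hS : ∀ k, S k = Finset.univ.filter (fun j => lam ≤ |x k j|))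
    (hsupp : ∀ k, spt (x (k + 1)) ⊆ S k)
    (hmin : ∀ k, ∀ y : Fin n → ℝ, spt y ⊆ S k →
      nrm (A *ᵥ x (k + 1) - b) ≤ nrm (A *ᵥ y - b))
    (hnested : ∀ k, S (k + 1) ⊆ S k)
    (N : ℕ) (hsmall : ∀ k, N ≤ k → nrm (x (k + 1) - x k) < lam / 3) :
    (∀ k, N ≤ k → S (k + 1) = S k) ∧
    (∃ xstar : Fin n → ℝ, ∀ k, N + 1 ≤ k → x k = xstar) := by
  have hA : Function.Injective A.mulVec := inj_of_rank hrank
  -- stationarity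
  have hstat : ∀ k, N ≤ k → S (k + 1) = S k := by
    intro k hk
    refine le_antisymm (hnested k) ?_
    intro j hj
    rw [hS k] at hj
    rw [hS (k + 1)]
    simp only [Finset.mem_filter, Finset.mem_univ, true_and] at hj ⊢
    by_contra hlt
    push_neg at hlt
    -- j ∉ S (k+1), so x (k+2) j = 0
    have hjS : j ∉ S (k + 1) := by
      rw [hS (k + 1)]
      simp only [Finset.mem_filter, Finset.mem_univ, true_and, not_le]
      exact hlt
    have hx2 : x (k + 2) j = 0 := by
      by_contra h
      exact hjS (hsupp (k + 1) (by
        simp only [spt, Finset.mem_filter, Finset.mem_univ, true_and]; exact h))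
    have d1 : |x (k + 1) j - x k j| < lam / 3 := by
      have := abs_le_nrm (x (k + 1) - x k) j
      simp only [Pi.sub_apply] at this
      exact lt_of_le_of_lt this (hsmall k hk)
    have d2 : |x (k + 2) j - x (k + 1) j| < lam / 3 := by
      have := abs_le_nrm (x (k + 2) - x (k + 1)) j
      simp only [Pi.sub_apply] at this
      exact lt_of_le_of_lt this (hsmall (k + 1) (by omega))
    rw [hx2] at d2
    have : |x (k + 1) j| < lam / 3 := by rwa [zero_sub, abs_neg] at d2
    have := abs_sub_abs_le_abs_sub (x k j) (x (k + 1) j)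
    rw [abs_sub_comm] at this
    linarith
  refine ⟨hstat, ⟨x (N + 1), ?_⟩⟩
  -- fixed point
  have hstep : ∀ k, N ≤ k → x (k + 2) = x (k + 1) := by
    intro k hk
    have hSk : S (k + 1) = S k := hstat k hk
    refine lsq_unique hA b (S k) (x (k + 2)) (x (k + 1)) ?_ (hsupp k) ?_ (hmin k)
    · rw [← hSk]; exact hsupp (k + 1)
    · rw [← hSk]; exact hmin (k + 1)
  intro k hk
  induction k with
  | zero => omega
  | succ k ih =>
    rcases Nat.lt_or_ge k (N + 1) with h | h
    · have : k = N := by omega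
      rw [this]
    · rw [show k + 1 = (k - 1) + 2 by omega, hstep (k - 1) (by omega),
        show k - 1 + 1 = k by omega, ih h]
end

section
/- For the surrogate G(x,y) = ‖Ax−b‖₂² − ‖A(x−y)‖₂² + ‖x−y‖₂² + λ²‖x‖₀ and a fixed point x* of the SINDy scheme, if z ∈ ℝ^n satisfies ‖z‖_∞ < ε with ε ≤ λ² · min{ min_j 1/(2|a_jᵀ(Ax*−b)|), 1 } and ε ≤ λ, then G(x*+z, x*) − G(x*, x*) ≥ ‖z‖₂². -/
open Matrix
open scoped Matrix.Norms.L2Operator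

/-- For the surrogate
`G x y = ‖Ax−b‖₂² − ‖A(x−y)‖₂² + ‖x−y‖₂² + λ²‖x‖₀` and a fixed point `x*` of the SINDy
scheme, if `‖z‖_∞ < ε` with `ε ≤ λ² · min{min_j 1/(2|a_jᵀ(Ax*−b)|), 1}` and `ε ≤ λ`,
then `G (x*+z) x* − G x* x* ≥ ‖z‖₂²`. -/
theorem surrogate_growth_at_fixed_point {m n : ℕ}
    (A : Matrix (Fin m) (Fin n) ℝ) (hrank : A.rank = n) (hA : ‖A‖ = 1)
    (b : Fin m → ℝ) (lam : ℝ) (hlam : 0 < lam)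
    (xstar : Fin n → ℝ)
    (hgrad : ∀ j, xstar j ≠ 0 → ∑ i, A i j * (A *ᵥ xstar - b) i = 0)
    (hthr : ∀ j, xstar j ≠ 0 ↔ lam ≤ |xstar j|)
    (G : (Fin n → ℝ) → (Fin n → ℝ) → ℝ)
    (hG : ∀ x y, G x y = nrm (A *ᵥ x - b) ^ 2 - nrm (A *ᵥ (x - y)) ^ 2
      + nrm (x - y) ^ 2 + lam ^ 2 * (spt x).card)
    (ε : ℝ) (hε0 : 0 < ε) (hε1 : ε ≤ lam ^ 2) (hε2 : ε ≤ lam)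
    (hε3 : ∀ j, (∑ i, A i j * (A *ᵥ xstar - b) i) ≠ 0 →
      ε ≤ lam ^ 2 / (2 * |∑ i, A i j * (A *ᵥ xstar - b) i|)) :
    ∀ z : Fin n → ℝ, (∀ j, |z j| < ε) →
      nrm z ^ 2 ≤ G (xstar + z) xstar - G xstar xstar := by

  intro z hz
  have nrm_sq : ∀ (v : Fin m → ℝ), nrm v ^ 2 = ∑ i, v i ^ 2 := by
    intro v; exact Real.sq_sqrt (by positivity)
  have nrm_sq' : ∀ (v : Fin n → ℝ), nrm v ^ 2 = ∑ i, v i ^ 2 := by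
    intro v; exact Real.sq_sqrt (by positivity)
  set c : Fin n → ℝ := fun j => ∑ i, A i j * (A *ᵥ xstar - b) i with hc
  set S : Finset (Fin n) := spt z \ spt xstar with hS
  have hmem : ∀ (v : Fin n → ℝ) j, j ∈ spt v ↔ v j ≠ 0 := by
    intro v j; simp [spt]
  -- supp xstar ⊆ supp (xstar + z)
  have hsub1 : spt xstar ⊆ spt (xstar + z) := by
    intro j hj
    rw [hmem] at hj ⊢
    have h1 : lam ≤ |xstar j| := (hthr j).mp hj
    have h2 : |z j| < ε := hz j
    intro h0
    have h0' : xstar j + z j = 0 := h0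
    have hzx : z j = -xstar j := by linarith
    rw [hzx, abs_neg] at h2
    linarith
  have hsub2 : spt xstar ∪ S ⊆ spt (xstar + z) := by
    intro j hj
    rcases Finset.mem_union.mp hj with h | h
    · exact hsub1 h
    · rw [hS, Finset.mem_sdiff, hmem, hmem] at h
      rw [hmem]
      have hx0 : xstar j = 0 := by
        by_contra hx; exact h.2 hx
      simpa [Pi.add_apply, hx0] using h.1
  have hdisj : Disjoint (spt xstar) S := Finset.disjoint_sdiff
  have hcard : (spt xstar).card + S.card ≤ (spt (xstar + z)).card := by
    rw [← Finset.card_union_of_disjoint hdisj]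
    exact Finset.card_le_card hsub2
  -- cross term
  have hsum0 : ∑ j, z j * c j = ∑ j ∈ S, z j * c j := by
    refine (Finset.sum_subset S.subset_univ ?_).symm
    intro j _ hj
    rw [hS, Finset.mem_sdiff, hmem, hmem] at hj
    push_neg at hj
    by_cases hzj : z j = 0
    · simp [hzj]
    · have hxj : xstar j ≠ 0 := hj hzj
      have : c j = 0 := hgrad j hxj
      simp [this]
  have hterm : ∀ j ∈ S, -(lam ^ 2 / 2) ≤ z j * c j := by
    intro j _
    by_cases hcj : c j = 0
    · simp [hcj]; positivity
    · have habs : 0 < |c j| := abs_pos.mpr hcj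
      have h3 := hε3 j hcj
      have h4 : ε * |c j| ≤ lam ^ 2 / 2 := by
        have h3' : ε ≤ lam ^ 2 / (2 * |c j|) := h3
        rw [le_div_iff₀ (by positivity)] at h3'
        linarith
      have h5 : |z j * c j| ≤ ε * |c j| := by
        rw [abs_mul]
        exact mul_le_mul_of_nonneg_right (le_of_lt (hz j)) (le_of_lt habs)
      have := neg_abs_le (z j * c j)
      linarith
  have hTlow : -(S.card * (lam ^ 2 / 2)) ≤ ∑ j ∈ S, z j * c j := by
    have := Finset.card_nsmul_le_sum S (fun j => z j * c j) (-(lam ^ 2 / 2)) hterm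
    simpa [nsmul_eq_mul, mul_neg] using this
  -- rewrite cross sum
  have key : ∑ i, (A *ᵥ xstar - b) i * (A *ᵥ z) i = ∑ j, z j * c j := by
    simp only [mulVec, dotProduct, Finset.mul_sum]
    rw [Finset.sum_comm]
    refine Finset.sum_congr rfl fun j _ => ?_
    rw [hc, Finset.mul_sum]
    exact Finset.sum_congr rfl fun i _ => by ring
  -- expand G
  have hxz : (xstar + z) - xstar = z := by funext j; simp
  have hzero : xstar - xstar = (0 : Fin n → ℝ) := by funext j; simp
  rw [hG, hG, hxz, hzero]
  have hmv0 : A *ᵥ (0 : Fin n → ℝ) = 0 := Matrix.mulVec_zero A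
  rw [hmv0]
  have hnz : nrm (0 : Fin m → ℝ) = 0 := by simp [nrm]
  have hnz' : nrm (0 : Fin n → ℝ) = 0 := by simp [nrm]
  rw [hnz, hnz']
  have hexp : nrm (A *ᵥ (xstar + z) - b) ^ 2
      = nrm (A *ᵥ xstar - b) ^ 2 + 2 * ∑ i, (A *ᵥ xstar - b) i * (A *ᵥ z) i
        + nrm (A *ᵥ z) ^ 2 := by
    rw [nrm_sq, nrm_sq, nrm_sq, Finset.mul_sum, ← Finset.sum_add_distrib,
      ← Finset.sum_add_distrib]
    refine Finset.sum_congr rfl fun i _ => ?_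
    have : (A *ᵥ (xstar + z) - b) i = (A *ᵥ xstar - b) i + (A *ᵥ z) i := by
      simp [Matrix.mulVec_add]
      ring
    rw [this]; ring
  rw [hexp, key, hsum0]
  have hcardR : ((spt xstar).card : ℝ) + (S.card : ℝ) ≤ ((spt (xstar + z)).card : ℝ) := by
    exact_mod_cast hcard
  have hmul : lam ^ 2 * (((spt xstar).card : ℝ) + (S.card : ℝ))
      ≤ lam ^ 2 * ((spt (xstar + z)).card : ℝ) :=
    mul_le_mul_of_nonneg_left hcardR (by positivity)
  nlinarith [hTlow, hmul]
end

section
/- If the SINDy iterates are never stationary (x^{k+1} ≠ x^k for all k ≤ K), then the support sets are strictly decreasing: S^{k+1} ⊊ S^k for all k < K, and in particular card(S^K) ≤ card(S^0) − K. -/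
open Matrix
open scoped Matrix.Norms.L2Operator

/-- Injectivity of `mulVec` from full column rank. -/
lemma aux_mulVec_injective {m n : ℕ} (A : Matrix (Fin m) (Fin n) ℝ)
    (hrank : A.rank = n) : Function.Injective (A.mulVec) := by
  have hker : LinearMap.ker A.mulVecLin = ⊥ := by
    have h := A.mulVecLin.finrank_range_add_finrank_ker
    rw [show Module.finrank ℝ (Fin n → ℝ) = n by simp] at h
    have : Module.finrank ℝ (LinearMap.ker A.mulVecLin) = 0 := by
      unfold Matrix.rank at hrank; omega
    exact Submodule.finrank_eq_zero.mp this
  intro u v huv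
  have : A.mulVecLin (u - v) = 0 := by
    simp [Matrix.mulVecLin_apply, Matrix.mulVec_sub, huv]
  have h0 : u - v ∈ LinearMap.ker A.mulVecLin := this
  rw [hker] at h0
  exact sub_eq_zero.mp (by simpa using h0)

/-- Uniqueness of the least-squares minimizer over a support set. -/
lemma aux_unique {m n : ℕ} (A : Matrix (Fin m) (Fin n) ℝ)
    (hinj : Function.Injective A.mulVec) (b : Fin m → ℝ)
    (T : Finset (Fin n)) (x1 x2 : Fin n → ℝ)
    (h1s : spt x1 ⊆ T) (h2s : spt x2 ⊆ T)
    (h1 : ∀ y : Fin n → ℝ, spt y ⊆ T → nrm (A *ᵥ x1 - b) ≤ nrm (A *ᵥ y - b))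
    (h2 : ∀ y : Fin n → ℝ, spt y ⊆ T → nrm (A *ᵥ x2 - b) ≤ nrm (A *ᵥ y - b)) :
    x1 = x2 := by
  set z : Fin n → ℝ := fun j => (x1 j + x2 j) / 2 with hz
  have hzs : spt z ⊆ T := by
    intro j hj
    simp only [spt, Finset.mem_filter, Finset.mem_univ, true_and, hz] at hj
    by_cases h1j : x1 j = 0
    · exact h2s (by simp [spt]; intro h; exact hj (by simp [h1j, h]))
    · exact h1s (by simp [spt, h1j])
  -- squared norms
  have sqle : ∀ u v : Fin m → ℝ, nrm u ≤ nrm v → ∑ i, u i ^ 2 ≤ ∑ i, v i ^ 2 := by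
    intro u v h
    have hu : (0:ℝ) ≤ ∑ i, u i ^ 2 := Finset.sum_nonneg fun i _ => sq_nonneg _
    have hv : (0:ℝ) ≤ ∑ i, v i ^ 2 := Finset.sum_nonneg fun i _ => sq_nonneg _
    unfold nrm at h
    nlinarith [Real.sq_sqrt hu, Real.sq_sqrt hv, Real.sqrt_nonneg (∑ i, u i ^ 2),
      Real.sqrt_nonneg (∑ i, v i ^ 2)]
  have e12 : ∑ i, (A *ᵥ x1 - b) i ^ 2 = ∑ i, (A *ᵥ x2 - b) i ^ 2 :=
    le_antisymm (sqle _ _ (h1 x2 h2s)) (sqle _ _ (h2 x1 h1s))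
  have e1z : ∑ i, (A *ᵥ x1 - b) i ^ 2 ≤ ∑ i, (A *ᵥ z - b) i ^ 2 := sqle _ _ (h1 z hzs)
  -- parallelogram identity
  have hAz : ∀ i, (A *ᵥ z - b) i = ((A *ᵥ x1 - b) i + (A *ᵥ x2 - b) i) / 2 := by
    intro i
    have : A *ᵥ z = fun i => ((A *ᵥ x1) i + (A *ᵥ x2) i) / 2 := by
      funext i
      simp only [hz, Matrix.mulVec, dotProduct]
      rw [← Finset.sum_add_distrib, Finset.sum_div]
      exact Finset.sum_congr rfl fun j _ => by ring
    simp [this, Pi.sub_apply]; ring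
  have hpar : ∑ i, (A *ᵥ x1 - b) i ^ 2 + ∑ i, (A *ᵥ x2 - b) i ^ 2
      = 2 * ∑ i, (A *ᵥ z - b) i ^ 2 + (1/2) * ∑ i, ((A *ᵥ x1 - b) i - (A *ᵥ x2 - b) i) ^ 2 := by
    rw [Finset.mul_sum, Finset.mul_sum, ← Finset.sum_add_distrib, ← Finset.sum_add_distrib]
    congr 1; funext i
    rw [hAz i]; ring
  have hdiff : ∑ i, ((A *ᵥ x1 - b) i - (A *ᵥ x2 - b) i) ^ 2 ≤ 0 := by linarith
  have hAeq : A *ᵥ x1 = A *ᵥ x2 := by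
    funext i
    have h0 : ∀ i, ((A *ᵥ x1 - b) i - (A *ᵥ x2 - b) i) ^ 2 = 0 := by
      intro i
      have := (Finset.sum_eq_zero_iff_of_nonneg (fun i _ => sq_nonneg
        ((A *ᵥ x1 - b) i - (A *ᵥ x2 - b) i))).mp
        (le_antisymm hdiff (Finset.sum_nonneg fun i _ => sq_nonneg _))
      exact this i (Finset.mem_univ i)
    have := pow_eq_zero_iff (n := 2) (by norm_num) |>.mp (h0 i)
    have : (A *ᵥ x1) i - b i - ((A *ᵥ x2) i - b i) = 0 := by simpa [Pi.sub_apply] using this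
    linarith
  exact hinj hAeq

/-- If the SINDy iterates are never stationary (`x^{k+1} ≠ x^k` for all
`k ≤ K`), then the support sets are strictly decreasing: `S^{k+1} ⊊ S^k` for all
`k < K`, and in particular `card (S K) ≤ card (S 0) − K`. -/
theorem sindy_strictly_decreasing_supports {m n : ℕ}
    (A : Matrix (Fin m) (Fin n) ℝ) (hrank : A.rank = n)
    (b : Fin m → ℝ) (lam : ℝ) (hlam : 0 < lam)
    (x : ℕ → Fin n → ℝ) (S : ℕ → Finset (Fin n))
    (hx0 : x 0 = (Aᵀ * A)⁻¹ *ᵥ (Aᵀ *ᵥ b))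
    (hS : ∀ k, S k = Finset.univ.filter (fun j => lam ≤ |x k j|))
    (hsupp : ∀ k, spt (x (k + 1)) ⊆ S k)
    (hmin : ∀ k, ∀ y : Fin n → ℝ, spt y ⊆ S k →
      nrm (A *ᵥ x (k + 1) - b) ≤ nrm (A *ᵥ y - b))
    (K : ℕ) (hnonstat : ∀ k ≤ K, x (k + 1) ≠ x k) :
    (∀ k < K, S (k + 1) ⊂ S k) ∧ (S K).card + K ≤ (S 0).card := by
  have hinj := aux_mulVec_injective A hrank
  -- S (k+1) ⊆ S k for all k
  have hsub : ∀ k, S (k + 1) ⊆ S k := by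
    intro k j hj
    apply hsupp k
    rw [hS (k + 1)] at hj
    simp only [Finset.mem_filter, Finset.mem_univ, true_and] at hj
    simp only [spt, Finset.mem_filter, Finset.mem_univ, true_and]
    intro h
    rw [h, abs_zero] at hj
    linarith
  have hstrict : ∀ k < K, S (k + 1) ⊂ S k := by
    intro k hk
    refine ⟨hsub k, fun hle => ?_⟩
    have hSeq : S (k + 1) = S k := le_antisymm (hsub k) hle
    have heq : x (k + 2) = x (k + 1) := by
      apply aux_unique A hinj b (S k) (x (k + 2)) (x (k + 1))
      · rw [← hSeq]; exact hsupp (k + 1)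
      · exact hsupp k
      · intro y hy; rw [← hSeq] at hy; exact hmin (k + 1) y hy
      · exact hmin k
    exact hnonstat (k + 1) (by omega) heq
  refine ⟨hstrict, ?_⟩
  have hcard : ∀ j ≤ K, (S j).card + j ≤ (S 0).card := by
    intro j
    induction j with
    | zero => simp
    | succ i ih =>
      intro hij
      have h1 := ih (by omega)
      have h2 := Finset.card_lt_card (hstrict i (by omega))
      omega
  exact hcard K le_rfl
end
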